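/- Let p be a prime, M ≥ 0 an integer, and F : [0,1] → ℂ continuous, viewed radially on ℤ_p. The (M+2)-dimensional complex vector space R_M(ℤ_p) spanned by 1_{S_0}, …, 1_{S_{-M}}, Ω(p^{M+1}|·|_p) is invariant under the convolution operator g ↦ F(|·|_p) * g. -/

import Mathlib

open MeasureTheory

noncomputable instance (p : ℕ) [Fact p.Prime] : MeasurableSpace ℤ_[p] := borel _
instance (p : ℕ) [Fact p.Prime] : BorelSpace ℤ_[p] := ⟨rfl⟩

/-- The normalized Haar measure on the compact additive group ℤ_p (total mass 1). -/
noncomputable def haarZp (p : ℕ) [Fact p.Prime] : Measure ℤ_[p] :=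
  Measure.addHaarMeasure ⟨⟨Set.univ, isCompact_univ⟩, by simp⟩

/-- The radial function `x ↦ F(|x|_p)` on ℤ_p associated to `F : [0,1] → ℂ`. -/
noncomputable def radial (p : ℕ) [Fact p.Prime] (F : Set.Icc (0:ℝ) 1 → ℂ)
    (x : ℤ_[p]) : ℂ :=
  F ⟨‖x‖, ⟨norm_nonneg x, PadicInt.norm_le_one x⟩⟩

lemma pow_mem_Icc (p : ℕ) [Fact p.Prime] (j : ℕ) :
    ((p:ℝ))^(-(j:ℤ)) ∈ Set.Icc (0:ℝ) 1 := by
  have hp : (1:ℝ) ≤ p := by exact_mod_cast (Fact.out : p.Prime).one_le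
  exact ⟨by positivity, zpow_le_one_of_nonpos₀ hp (by simp)⟩

/-- The value F(p^{-j}). -/
noncomputable def Fval (p : ℕ) [Fact p.Prime] (F : Set.Icc (0:ℝ) 1 → ℂ) (j : ℕ) : ℂ :=
  F ⟨(p:ℝ)^(-(j:ℤ)), pow_mem_Icc p j⟩

/-- The sphere of radius p^{-j} centered at the origin in ℤ_p. -/
def sphereZp (p : ℕ) [Fact p.Prime] (j : ℕ) : Set ℤ_[p] :=
  {x : ℤ_[p] | ‖x‖ = (p:ℝ)^(-(j:ℤ))}

/-- The ball {x : |x|_p ≤ p^{-m}} in ℤ_p. -/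
def ballZp (p : ℕ) [Fact p.Prime] (m : ℕ) : Set ℤ_[p] :=
  {x : ℤ_[p] | ‖x‖ ≤ (p:ℝ)^(-(m:ℤ))}

/-- The basis family: indicators of the spheres S_0, …, S_{-M} and of the ball
{|x|_p ≤ p^{-M-1}}. -/
noncomputable def fam (p : ℕ) [Fact p.Prime] (M : ℕ) (i : Fin (M + 2)) :
    ℤ_[p] → ℂ :=
  if (i : ℕ) ≤ M then Set.indicator (sphereZp p i) (fun _ => (1:ℂ))
  else Set.indicator (ballZp p (M+1)) (fun _ => (1:ℂ))

/-!
The span consists exactly of the functions of the truncated norm `max |x|_p p^{-M-1}`.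
Two points with the same truncated norm differ either by a unit factor (when the norm exceeds
`p^{-M-1}`) or by a translation inside the ball of radius `p^{-M-1}`. Both maps preserve Haar
measure, the radial kernel and the truncated norm, so they carry the convolution integral at one
point to the integral at the other.
-/

open Function MeasureTheory

theorem mem_span_range_fiber_indicator_iff {X ι κ K : Type*} [Semiring K] [Fintype κ]
    [DecidableEq ι] {c : X → ι} {v : κ → ι} (hv : Injective v) (hc : ∀ x, c x ∈ Set.range v)
    {h : X → K} :
    h ∈ Submodule.span K (Set.range fun i x => if c x = v i then (1 : K) else 0) ↔
      h.FactorsThrough c := by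
  constructor
  · intro hh
    induction hh using Submodule.span_induction with
    | mem f hf =>
      obtain ⟨i, rfl⟩ := hf
      intro x y hxy
      simp only [hxy]
    | zero => exact fun _ _ _ => rfl
    | add f₁ f₂ _ _ h₁ h₂ => exact fun x y hxy => by simp only [Pi.add_apply, h₁ hxy, h₂ hxy]
    | smul a f _ hf => exact fun x y hxy => by simp only [Pi.smul_apply, hf hxy]
  · intro hh
    have hsum : h = ∑ i, extend c h 0 (v i) • fun x => if c x = v i then (1 : K) else 0 := by
      funext x
      obtain ⟨j, hj⟩ := hc x
      rw [Finset.sum_apply, Finset.sum_eq_single j]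
      · simp [hj, hh.extend_apply]
      · intro i _ hij
        simp [← hj, hv.ne hij.symm]
      · simp
    rw [hsum]
    exact Submodule.sum_mem _ fun i _ => Submodule.smul_mem _ _ (Submodule.subset_span ⟨i, rfl⟩)

theorem zpow_neg_fin_injective {a : ℝ} (ha : 1 < a) (n : ℕ) :
    Injective fun i : Fin n => a ^ (-((i : ℕ) : ℤ)) := by
  intro i j hij
  simpa [Fin.ext_iff] using zpow_right_injective₀ (by positivity) ha.ne' hij

theorem max_norm_add_eq_of_norm_le {E : Type*} [SeminormedAddCommGroup E] [IsUltrametricDist E]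
    {r : ℝ} (y : E) {t : E} (ht : ‖t‖ ≤ r) : max ‖y + t‖ r = max ‖y‖ r := by
  have h₁ : ‖y + t‖ ≤ max ‖y‖ r :=
    (IsUltrametricDist.norm_add_le_max y t).trans (max_le_max le_rfl ht)
  have h₂ : ‖y‖ ≤ max ‖y + t‖ r := by
    simpa using (IsUltrametricDist.norm_add_le_max (y + t) (-t)).trans
      (max_le_max le_rfl ((norm_neg t).trans_le ht))
  apply le_antisymm <;> apply max_le <;> simp [h₁, h₂]

section CompactGroup

variable {G : Type*} [AddGroup G] [TopologicalSpace G] [IsTopologicalAddGroup G] [CompactSpace G]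
  [MeasurableSpace G] [BorelSpace G] (μ : Measure G) [μ.IsAddHaarMeasure] [μ.Regular]

theorem ContinuousAddEquiv.measurePreserving_of_compactSpace (φ : G ≃ₜ+ G) :
    MeasurePreserving φ μ μ := by
  refine ⟨φ.toHomeomorph.continuous.measurable, ?_⟩
  simpa [addEquivAddHaarChar_eq_one_of_compactSpace] using addEquivAddHaarChar_smul_map μ φ

theorem ContinuousAddEquiv.integral_comp_of_compactSpace {E : Type*} [NormedAddCommGroup E]
    [NormedSpace ℝ E] (φ : G ≃ₜ+ G) (h : G → E) :
    ∫ x, h (φ x) ∂μ = ∫ x, h x ∂μ :=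
  (φ.measurePreserving_of_compactSpace μ).integral_comp φ.toHomeomorph.measurableEmbedding h

end CompactGroup

namespace PadicInt

variable {p : ℕ} [Fact p.Prime]

theorem exists_mul_units_eq_of_norm_eq {x y : ℤ_[p]} (h : ‖x‖ = ‖y‖) :
    ∃ u : ℤ_[p]ˣ, x * u = y := by
  by_cases hx : x = 0
  · exact ⟨1, by simp_all [eq_comm]⟩
  have hy : y ≠ 0 := by rintro rfl; simp_all
  have hval : x.valuation = y.valuation := by
    rw [norm_eq_zpow_neg_valuation hx, norm_eq_zpow_neg_valuation hy] at h
    have hp : (1 : ℝ) < p := Nat.one_lt_cast.mpr (Fact.out : p.Prime).one_lt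
    simpa using zpow_right_injective₀ (by positivity) hp.ne' h
  refine ⟨(unitCoeff hx)⁻¹ * unitCoeff hy, ?_⟩
  calc x * ↑((unitCoeff hx)⁻¹ * unitCoeff hy)
      = unitCoeff hx * p ^ x.valuation * ↑((unitCoeff hx)⁻¹ * unitCoeff hy) := by
        rw [← unitCoeff_spec hx]
    _ = unitCoeff hy * p ^ y.valuation * ↑(unitCoeff hx * (unitCoeff hx)⁻¹) := by
        push_cast; rw [hval]; ring
    _ = y := by rw [mul_inv_cancel, Units.val_one, mul_one, ← unitCoeff_spec hy]

theorem max_norm_zpow_mem_range (m : ℕ) (x : ℤ_[p]) :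
    max ‖x‖ ((p : ℝ) ^ (-(m : ℤ))) ∈ Set.range fun i : Fin (m + 1) => (p : ℝ) ^ (-((i : ℕ) : ℤ)) := by
  have hp : (1 : ℝ) < p := Nat.one_lt_cast.mpr (Fact.out : p.Prime).one_lt
  by_cases hx : x = 0
  · exact ⟨Fin.last m, by simp [hx]⟩
  rw [norm_eq_zpow_neg_valuation hx]
  by_cases hv : x.valuation ≤ m
  · refine ⟨⟨x.valuation, by omega⟩, (max_eq_left ?_).symm⟩
    exact zpow_le_zpow_right₀ hp.le (by omega)
  · refine ⟨Fin.last m, (max_eq_right ?_).symm⟩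
    exact zpow_le_zpow_right₀ hp.le (by omega)

theorem factorsThrough_max_norm_integral_sub_mul (μ : Measure ℤ_[p]) [μ.IsAddHaarMeasure]
    {f g : ℤ_[p] → ℂ} {r : ℝ} (hf : f.FactorsThrough (‖·‖))
    (hg : g.FactorsThrough fun x => max ‖x‖ r) :
    (fun x => ∫ y, f (x - y) * g y ∂μ).FactorsThrough fun x => max ‖x‖ r := by
  intro x x' hxx'
  dsimp only at hxx' ⊢
  by_cases hx : ‖x‖ ≤ r
  · have hx' : ‖x'‖ ≤ r := by
      rw [max_eq_right hx, eq_comm, max_eq_right_iff] at hxx'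
      exact hxx'
    have ht : ‖x - x'‖ ≤ r := by
      simpa [sub_eq_add_neg] using
        (IsUltrametricDist.norm_add_le_max x (-x')).trans (max_le hx (by simpa using hx'))
    rw [← integral_add_right_eq_self _ (x - x')]
    congr 1 with y
    rw [hg (max_norm_add_eq_of_norm_le y ht)]
    congr 2
    abel
  · have hnorm : ‖x‖ = ‖x'‖ := by
      simp only [max_def] at hxx'
      split_ifs at hxx' <;> linarith
    obtain ⟨u, rfl⟩ := exists_mul_units_eq_of_norm_eq hnorm
    let φ := (ContinuousLinearEquiv.unitsEquivAut ℤ_[p] u).toContinuousAddEquiv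
    have hφ : ∀ z, φ z = z * u := fun z => by simp [φ]
    have hu : ∀ z : ℤ_[p], ‖z * u‖ = ‖z‖ := fun z => by rw [norm_mul, norm_units, mul_one]
    rw [← φ.integral_comp_of_compactSpace μ fun y => f (x * u - y) * g y]
    congr 1 with y
    rw [hφ, ← sub_mul, hf (hu (x - y)), hg (show max ‖y * u‖ r = max ‖y‖ r by rw [hu])]

end PadicInt

section

variable {p : ℕ} [Fact p.Prime]

instance : (haarZp p).IsAddHaarMeasure := by unfold haarZp; infer_instance

theorem radial_factorsThrough_norm (F : Set.Icc (0 : ℝ) 1 → ℂ) :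
    (radial p F).FactorsThrough (‖·‖) := by
  intro a b hab
  simp only [radial, hab]

theorem fam_eq_ite_max_norm (M : ℕ) :
    fam p M = fun (i : Fin (M + 2)) (x : ℤ_[p]) =>
      if max ‖x‖ ((p : ℝ) ^ (-((M + 1 : ℕ) : ℤ))) = (p : ℝ) ^ (-((i : ℕ) : ℤ)) then (1 : ℂ)
      else 0 := by
  funext i x
  unfold fam
  by_cases hi : (i : ℕ) ≤ M
  · have hlt : (p : ℝ) ^ (-((M + 1 : ℕ) : ℤ)) < (p : ℝ) ^ (-((i : ℕ) : ℤ)) :=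
      zpow_lt_zpow_right₀ (Nat.one_lt_cast.mpr (Fact.out : p.Prime).one_lt) (by omega)
    have hiff : ‖x‖ = (p : ℝ) ^ (-((i : ℕ) : ℤ)) ↔
        max ‖x‖ ((p : ℝ) ^ (-((M + 1 : ℕ) : ℤ))) = (p : ℝ) ^ (-((i : ℕ) : ℤ)) :=
      ⟨fun h => by rw [h, max_eq_left hlt.le],
        fun h => ((max_eq_iff.mp h).resolve_right fun h' => hlt.ne h'.1).1⟩
    simp only [if_pos hi, Set.indicator_apply, sphereZp, Set.mem_ofPred_eq, hiff]
  · have hi' : (i : ℕ) = M + 1 := by omega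
    simp only [if_neg hi, Set.indicator_apply, ballZp, Set.mem_ofPred_eq, hi', max_eq_right_iff]

end

theorem stmt15_general (p : ℕ) [Fact p.Prime] (M : ℕ)
    (F : Set.Icc (0:ℝ) 1 → ℂ)
    (g : ℤ_[p] → ℂ) (hg : g ∈ Submodule.span ℂ (Set.range (fam p M))) :
    (fun x => ∫ y, radial p F (x - y) * g y ∂(haarZp p)) ∈
      Submodule.span ℂ (Set.range (fam p M)) := by
  rw [fam_eq_ite_max_norm, mem_span_range_fiber_indicator_iff
    (zpow_neg_fin_injective (Nat.one_lt_cast.mpr (Fact.out : p.Prime).one_lt) _)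
    (PadicInt.max_norm_zpow_mem_range _)] at hg ⊢
  exact PadicInt.factorsThrough_max_norm_integral_sub_mul _ (radial_factorsThrough_norm F) hg

theorem stmt15 (p : ℕ) [Fact p.Prime] (M : ℕ)
    (F : Set.Icc (0:ℝ) 1 → ℂ) (hF : Continuous F)
    (g : ℤ_[p] → ℂ) (hg : g ∈ Submodule.span ℂ (Set.range (fam p M))) :
    (fun x => ∫ y, radial p F (x - y) * g y ∂(haarZp p)) ∈
      Submodule.span ℂ (Set.range (fam p M)) :=
  stmt15_general p M F g hg
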